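/- Let G be a 3-connected graph and (A,B) a nontrivial tri-separation of G. Then (A,B) is totally nested if and only if (A,B) is strong and nested with every strong nontrivial tri-separation of G. -/

import Mathlib

/-!
A totally nested tri-separation `(A,B)` is strong: for a separator vertex `v` of degree three, the
atomic tri-separation `({v}, V - v)` would cross it. Conversely, let `(A,B)` be strong and nested
with every strong nontrivial tri-separation, and induct on the number of separator vertices of a
tri-separation `(C,D)`. If a side of `(C,D)` has no cycle, it is a single vertex of degree three;
this vertex is not a separator vertex of the strong `(A,B)`, so the two are nested. If `(C,D)` is
nontrivial but not strong, shift a degree-three separator vertex `v` into `C \ D`, together with its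
neighbour in the separator if that neighbour would otherwise keep too few neighbours in `D`, and
likewise into `D \ C`. Both shifts are tri-separations with fewer separator vertices. If both were
nested with `(A,B)` while `(C,D)` is not, then `A` or `B` would lie in the separator of `(C,D)`, or
the shifted vertices would lie on different strict sides of `(A,B)`; either way, counting separator
vertices and edges gives `(A,B)` order at least four.
-/

namespace Paper

open SimpleGraph

variable {V : Type*} [Fintype V] [DecidableEq V]

/-- A graph is `k`-connected if it has more than `k` vertices and deleting
fewer than `k` vertices never disconnects it. -/
def KConnected {W : Type*} (k : ℕ) (H : SimpleGraph W) : Prop :=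
  k < Nat.card W ∧ ∀ S : Set W, S.ncard < k → (H.induce Sᶜ).Connected

/-- A mixed-separation of `G`: `A ∪ B = V(G)` and both `A \ B` and `B \ A` are nonempty. -/
def MixedSep (G : SimpleGraph V) (A B : Set V) : Prop :=
  A ∪ B = Set.univ ∧ (A \ B).Nonempty ∧ (B \ A).Nonempty

/-- The edges of the separator of `(A,B)`: the edges between `A \ B` and `B \ A`. -/
def sepEdges (G : SimpleGraph V) (A B : Set V) : Set (Sym2 V) :=
  {e | e ∈ G.edgeSet ∧ ∃ x ∈ A \ B, ∃ y ∈ B \ A, e = s(x, y)}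

/-- The separator of `(A,B)`: the vertices of `A ∩ B` together with the
edges between `A \ B` and `B \ A`, viewed as a set in `V ⊕ Sym2 V`. -/
def sepSet (G : SimpleGraph V) (A B : Set V) : Set (V ⊕ Sym2 V) :=
  (Sum.inl '' (A ∩ B)) ∪ (Sum.inr '' sepEdges G A B)

/-- The order of a mixed-separation: the size of its separator. -/
noncomputable def sepOrder (G : SimpleGraph V) (A B : Set V) : ℕ :=
  (sepSet G A B).ncard

/-- A mixed `k`-separation. -/
def MixedKSep (G : SimpleGraph V) (k : ℕ) (A B : Set V) : Prop :=
  MixedSep G A B ∧ sepOrder G A B = k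

/-- A tri-separation: a mixed 3-separation such that every vertex of `A ∩ B`
has at least two neighbours in both `G[A]` and `G[B]`. -/
def TriSep (G : SimpleGraph V) (A B : Set V) : Prop :=
  MixedKSep G 3 A B ∧
    ∀ v ∈ A ∩ B, 2 ≤ (G.neighborSet v ∩ A).ncard ∧ 2 ≤ (G.neighborSet v ∩ B).ncard

/-- Two mixed-separations are nested if, after possibly swapping the names of
the sides of either one, `A ⊆ C` and `B ⊇ D`. -/
def Nested (A B C D : Set V) : Prop :=
  (A ⊆ C ∧ D ⊆ B) ∨ (A ⊆ D ∧ C ⊆ B) ∨ (B ⊆ C ∧ D ⊆ A) ∨ (B ⊆ D ∧ C ⊆ A)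

/-- The induced subgraph `G[A]` contains a cycle. -/
def HasCycleIn (G : SimpleGraph V) (A : Set V) : Prop :=
  ∃ (u : V) (p : G.Walk u u), p.IsCycle ∧ ∀ x ∈ p.support, x ∈ A

/-- A mixed 3-separation is nontrivial if both sides induce a subgraph containing a cycle. -/
def NontrivialSep (G : SimpleGraph V) (A B : Set V) : Prop :=
  HasCycleIn G A ∧ HasCycleIn G B

/-- A mixed-separation is strong if every vertex in its separator has degree at least 4. -/
def StrongSep (G : SimpleGraph V) (A B : Set V) : Prop :=
  ∀ v ∈ A ∩ B, 4 ≤ (G.neighborSet v).ncard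

/-- A tri-separation is totally nested if it is nested with every tri-separation of `G`. -/
def TotallyNested (G : SimpleGraph V) (A B : Set V) : Prop :=
  ∀ C D : Set V, TriSep G C D → Nested A B C D

/-- A trivial tri-separation: its sides are the sides `{v}` and `V \ {v}` of an
atomic cut at a degree-3 vertex `v`. -/
def TrivialSep (G : SimpleGraph V) (A B : Set V) : Prop :=
  ∃ v : V, (G.neighborSet v).ncard = 3 ∧
    ((A = {v} ∧ B = {v}ᶜ) ∨ (B = {v} ∧ A = {v}ᶜ))

/-- Diagonal edges of the crossing-diagram of `(A,B)` and `(C,D)`: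
edges whose endvertices lie in opposite corners. -/
def diagEdges (G : SimpleGraph V) (A B C D : Set V) : Set (Sym2 V) :=
  {e | e ∈ G.edgeSet ∧ ∃ x y, e = s(x, y) ∧
    ((x ∈ (A \ B) ∩ (C \ D) ∧ y ∈ (B \ A) ∩ (D \ C)) ∨
     (x ∈ (A \ B) ∩ (D \ C) ∧ y ∈ (B \ A) ∩ (C \ D)))}

/-- The centre of the crossing-diagram: `A ∩ B ∩ C ∩ D` together with the diagonal edges. -/
def centre (G : SimpleGraph V) (A B C D : Set V) : Set (V ⊕ Sym2 V) :=
  (Sum.inl '' (A ∩ B ∩ C ∩ D)) ∪ (Sum.inr '' diagEdges G A B C D)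

/-- The link for the side `C` in the crossing-diagram of `(A,B)` and `(C,D)`:
the vertices `(A ∩ B) \ D` together with the non-diagonal edges of the separator
of `(A,B)` having an endvertex in a corner for `C`. -/
def link (G : SimpleGraph V) (A B C D : Set V) : Set (V ⊕ Sym2 V) :=
  (Sum.inl '' ((A ∩ B) \ D)) ∪
    (Sum.inr '' {e | e ∈ sepEdges G A B ∧ e ∉ diagEdges G A B C D ∧ ∃ x ∈ e, x ∈ C \ D})

/-- The corner-separator at the corner for `{A,C}`: the union of the links for `A`
and for `C` together with the centre, minus the diagonal edges without an
endvertex in the corner for `{A,C}`. -/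
def cornerSep (G : SimpleGraph V) (A B C D : Set V) : Set (V ⊕ Sym2 V) :=
  link G C D A B ∪ link G A B C D ∪ (Sum.inl '' (A ∩ B ∩ C ∩ D)) ∪
    (Sum.inr '' {e | e ∈ diagEdges G A B C D ∧ ∃ x ∈ e, x ∈ (A \ B) ∩ (C \ D)})

/-- Jumping edges: edges joining vertices of two opposite links. -/
def jumpEdges (G : SimpleGraph V) (A B C D : Set V) : Set (Sym2 V) :=
  {e | e ∈ G.edgeSet ∧ ∃ x y, e = s(x, y) ∧
    ((x ∈ (A ∩ B) \ D ∧ y ∈ (A ∩ B) \ C) ∨ (x ∈ (C ∩ D) \ B ∧ y ∈ (C ∩ D) \ A))}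

/-- A 2-separation: a separation of order two with no edges in its separator. -/
def TwoSep (G : SimpleGraph V) (A B : Set V) : Prop :=
  A ∪ B = Set.univ ∧ (A \ B).Nonempty ∧ (B \ A).Nonempty ∧
    (A ∩ B).ncard = 2 ∧ sepEdges G A B = ∅

/-- `K` is (the vertex set of) a connected component of `G - S`. -/
def IsCompOf (G : SimpleGraph V) (S K : Set V) : Prop :=
  ∃ c : (G.induce Sᶜ).ConnectedComponent, K = Subtype.val '' c.supp

end Paper

namespace Paper

open SimpleGraph

section Basic

variable {V : Type*} {G : SimpleGraph V} {A B C D S : Set V} {v x y : V}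

lemma mem_of_union_eq_univ (h : A ∪ B = Set.univ) (hx : x ∉ A) : x ∈ B :=
  Set.compl_subset_iff_union.2 h hx

lemma mem_sepEdges (h : G.Adj x y) (hx : x ∈ A \ B) (hy : y ∈ B \ A) :
    s(x, y) ∈ sepEdges G A B :=
  ⟨h, x, hx, y, hy, rfl⟩

lemma not_mem_sepEdges_of_mem_inter (hx : x ∈ A ∩ B) (y : V) : s(x, y) ∉ sepEdges G A B := by
  rintro ⟨-, a, ha, b, hb, he⟩
  rcases Sym2.mem_iff.1 (he ▸ Sym2.mem_mk_left x y) with rfl | rfl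
  exacts [ha.2 hx.2, hb.2 hx.1]

lemma sepEdges_comm : sepEdges G A B = sepEdges G B A := by
  ext e
  constructor <;> rintro ⟨he, x, hx, y, hy, rfl⟩ <;> exact ⟨he, y, hy, x, hx, Sym2.eq_swap⟩

lemma sepOrder_eq [Finite V] : sepOrder G A B = (A ∩ B).ncard + (sepEdges G A B).ncard := by
  rw [sepOrder, sepSet, Set.ncard_union_eq, Set.ncard_image_of_injective _ Sum.inl_injective,
    Set.ncard_image_of_injective _ Sum.inr_injective]
  rw [Set.disjoint_left]
  rintro _ ⟨_, -, rfl⟩ ⟨_, -, h⟩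
  exact Sum.inr_ne_inl h

lemma MixedSep.symm (h : MixedSep G A B) : MixedSep G B A :=
  ⟨Set.union_comm A B ▸ h.1, h.2.2, h.2.1⟩

lemma TriSep.symm [Finite V] (h : TriSep G A B) : TriSep G B A := by
  refine ⟨⟨h.1.1.symm, ?_⟩, fun u hu => (h.2 u (Set.inter_comm A B ▸ hu)).symm⟩
  rw [sepOrder_eq, Set.inter_comm, ← sepEdges_comm, ← sepOrder_eq, h.1.2]

lemma TriSep.ncard_inter_add_ncard_sepEdges [Finite V] (h : TriSep G A B) :
    (A ∩ B).ncard + (sepEdges G A B).ncard = 3 :=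
  sepOrder_eq.symm.trans h.1.2

lemma StrongSep.symm (h : StrongSep G A B) : StrongSep G B A :=
  fun u hu => h u (Set.inter_comm A B ▸ hu)

lemma nested_comm_right : Nested A B C D ↔ Nested A B D C := by
  unfold Nested; tauto

lemma Nested.resolve_diff_right (h : Nested A B C (D \ S)) (hn : ¬Nested A B C D) :
    (A ⊆ C ∧ D \ S ⊆ B) ∨ (B ⊆ C ∧ D \ S ⊆ A) := by
  rcases h with h | h | h | h
  · exact Or.inl h
  · exact absurd (Or.inr (Or.inl ⟨h.1.trans Set.sdiff_subset, h.2⟩)) hn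
  · exact Or.inr h
  · exact absurd (Or.inr (Or.inr (Or.inr ⟨h.1.trans Set.sdiff_subset, h.2⟩))) hn

lemma nested_singleton_compl (hAB : A ∪ B = Set.univ) (hv : v ∉ A ∩ B) :
    Nested A B {v} {v}ᶜ := by
  by_cases hvA : v ∈ A
  · exact Or.inr (Or.inr (Or.inr ⟨fun x hx hxv => hv ⟨hvA, hxv ▸ hx⟩,
      Set.singleton_subset_iff.2 hvA⟩))
  · exact Or.inr (Or.inl ⟨fun x hx hxv => hvA (hxv ▸ hx),
      Set.singleton_subset_iff.2 (mem_of_union_eq_univ hAB hvA)⟩)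

lemma HasCycleIn.three_le_ncard [Finite V] (h : HasCycleIn G A) : 3 ≤ A.ncard := by
  classical
  obtain ⟨u, p, hp, hA⟩ := h
  calc 3 ≤ p.length := hp.three_le_length
    _ = p.support.tail.toFinset.card := by
      rw [List.toFinset_card_of_nodup hp.support_nodup, List.length_tail, p.length_support]; rfl
    _ = (p.support.tail.toFinset : Set V).ncard := (Set.ncard_coe_finset _).symm
    _ ≤ A.ncard := Set.ncard_le_ncard (fun x hx => hA x (List.mem_of_mem_tail (by simpa using hx)))

/-- Edges leaving `A` at vertices of `A \ B` are separator edges, and distinct ones for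
distinct vertices. -/
lemma sum_ncard_neighborSet_diff_le_ncard_sepEdges [Finite V] (hAB : A ∪ B = Set.univ)
    (U : Finset V) (hU : ↑U ⊆ A \ B) :
    ∑ u ∈ U, (G.neighborSet u \ A).ncard ≤ (sepEdges G A B).ncard := by
  classical
  have := Fintype.ofFinite V
  let F : V → Finset (Sym2 V) := fun u => (G.neighborSet u \ A).toFinset.image (s(u, ·))
  have hF : ∀ u, (F u).card = (G.neighborSet u \ A).ncard := fun u => by
    rw [Finset.card_image_of_injective _ fun _ _ h => Sym2.congr_right.1 h,
      Set.ncard_eq_toFinset_card']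
  have hdisj : (U : Set V).PairwiseDisjoint F := by
    intro u hu u' hu' huu'
    simp only [Function.onFun, F, Finset.disjoint_left, Finset.mem_image, Set.mem_toFinset]
    rintro _ ⟨y, hy, rfl⟩ ⟨y', hy', he⟩
    rcases Sym2.eq_iff.1 he with ⟨h, -⟩ | ⟨h, -⟩
    exacts [huu' h.symm, hy.2 (h ▸ (hU hu').1)]
  have hsub : ((U.biUnion F : Finset (Sym2 V)) : Set (Sym2 V)) ⊆ sepEdges G A B := by
    intro e he
    simp only [Finset.coe_biUnion, Finset.mem_coe, Set.mem_iUnion, F, Finset.coe_image,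
      Set.coe_toFinset, Set.mem_image] at he
    obtain ⟨u, hu, y, hy, rfl⟩ := he
    exact mem_sepEdges hy.1 (hU hu) ⟨mem_of_union_eq_univ hAB hy.2, hy.2⟩
  calc ∑ u ∈ U, (G.neighborSet u \ A).ncard = ∑ u ∈ U, (F u).card := by simp only [hF]
    _ = (U.biUnion F).card := (Finset.card_biUnion hdisj).symm
    _ = ((U.biUnion F : Finset (Sym2 V)) : Set (Sym2 V)).ncard := (Set.ncard_coe_finset _).symm
    _ ≤ (sepEdges G A B).ncard := Set.ncard_le_ncard hsub

end Basic

section Connectivity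

variable {V : Type*} {G : SimpleGraph V} {C D S : Set V} {k : ℕ} {v x y : V}

lemma KConnected.exists_walk_avoiding (hG : KConnected k G) (hS : S.ncard < k) (hx : x ∉ S)
    (hy : y ∉ S) : ∃ p : G.Walk x y, ∀ z ∈ p.support, z ∉ S := by
  obtain ⟨q⟩ := (hG.2 S hS).preconnected ⟨x, hx⟩ ⟨y, hy⟩
  have hq : ∀ z ∈ (q.map (Embedding.induce Sᶜ).toHom).support, z ∉ S := by
    intro z hz
    rw [Walk.support_map, List.mem_map] at hz
    obtain ⟨z, -, rfl⟩ := hz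
    exact z.2
  exact ⟨_, hq⟩

lemma ncard_neighborSet_inter_lt [Finite V] (hv : v ∈ C) : (G.neighborSet v ∩ C).ncard < C.ncard :=
  Set.ncard_lt_ncard <| (Set.ssubset_iff_of_subset Set.inter_subset_right).2
    ⟨v, hv, fun h => G.notMem_neighborSet_self h.1⟩

lemma KConnected.three_le_ncard_neighborSet [Finite V] (hG : KConnected 3 G) (v : V) :
    3 ≤ (G.neighborSet v).ncard := by
  by_contra! hlt
  have hcard : (insert v (G.neighborSet v)).ncard < (Set.univ : Set V).ncard := by
    rw [Set.ncard_univ]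
    linarith [Set.ncard_insert_le v (G.neighborSet v), hG.1]
  obtain ⟨y, -, hy⟩ := Set.exists_mem_notMem_of_ncard_lt_ncard hcard
  obtain ⟨p, hp⟩ := hG.exists_walk_avoiding (by omega) G.notMem_neighborSet_self
    (fun h => hy (Or.inr h))
  obtain ⟨d, hd, hfst, hsnd⟩ := p.exists_boundary_dart {v} rfl (fun h => hy (Or.inl h))
  rw [Set.mem_singleton_iff] at hfst
  exact hp _ (p.dart_snd_mem_support_of_mem_darts hd) (hfst ▸ d.adj)

end Connectivity

section SepOrder

variable {V : Type*} [Finite V] {G : SimpleGraph V} {C D : Set V}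

lemma ncard_mul_le_ncard_sepEdges {m : ℕ} (hCD : C ∪ D = Set.univ) {U : Set V}
    (hU : U ⊆ C \ D) (hm : ∀ u ∈ U, m ≤ (G.neighborSet u \ C).ncard) :
    U.ncard * m ≤ (sepEdges G C D).ncard := by
  have := Fintype.ofFinite V
  classical
  calc U.ncard * m = U.toFinset.card • m := by rw [Set.ncard_eq_toFinset_card', smul_eq_mul]
    _ ≤ ∑ u ∈ U.toFinset, (G.neighborSet u \ C).ncard :=
      Finset.card_nsmul_le_sum _ _ _ fun u hu => hm u (Set.mem_toFinset.1 hu)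
    _ ≤ (sepEdges G C D).ncard :=
      sum_ncard_neighborSet_diff_le_ncard_sepEdges hCD _ (by simpa using hU)

lemma KConnected.three_le_sepOrder (hG : KConnected 3 G) (hCD : MixedSep G C D) :
    3 ≤ sepOrder G C D := by
  by_contra! hlt
  rw [sepOrder_eq] at hlt
  set T := {u ∈ C \ D | (G.neighborSet u \ C).Nonempty}
  have hT : T.ncard ≤ (sepEdges G C D).ncard := by
    simpa using ncard_mul_le_ncard_sepEdges (m := 1) hCD.1 (U := T) (fun u hu => hu.1)
      fun u hu => (Set.ncard_pos).2 hu.2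
  -- `(C ∩ D) ∪ T` has at most two vertices, so it does not separate `C \ D` from `D \ C`.
  have hCT : C \ D ⊆ T := by
    intro c hc
    by_contra hcT
    obtain ⟨d, hd⟩ := hCD.2.2
    obtain ⟨p, hp⟩ := hG.exists_walk_avoiding (S := C ∩ D ∪ T)
      ((Set.ncard_union_le _ _).trans_lt (by omega))
      (by rintro (h | h); exacts [hc.2 h.2, hcT h])
      (by rintro (h | h); exacts [hd.2 h.1, hd.2 h.1.1])
    obtain ⟨e, he, hfst, hsnd⟩ := p.exists_boundary_dart (C \ D) hc (fun h => hd.2 h.1)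
    have hsndC : e.snd ∉ C := fun h =>
      hp _ (p.dart_snd_mem_support_of_mem_darts he) (Or.inl ⟨h, not_not.1 fun h' => hsnd ⟨h, h'⟩⟩)
    exact hp _ (p.dart_fst_mem_support_of_mem_darts he) (Or.inr ⟨hfst, e.snd, e.adj, hsndC⟩)
  have hdeg : ∀ u ∈ C \ D, 4 - C.ncard ≤ (G.neighborSet u \ C).ncard := by
    intro u hu
    have := Set.ncard_inter_add_ncard_sdiff_eq_ncard (G.neighborSet u) C
    have := ncard_neighborSet_inter_lt (G := G) hu.1
    have := hG.three_le_ncard_neighborSet u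
    omega
  have hsum := ncard_mul_le_ncard_sepEdges hCD.1 subset_rfl hdeg
  have hm : (C \ D).ncard ≤ (sepEdges G C D).ncard := (Set.ncard_le_ncard hCT).trans hT
  have hm1 : 1 ≤ (C \ D).ncard := (Set.ncard_pos).2 hCD.2.1
  rw [← Set.ncard_inter_add_ncard_sdiff_eq_ncard C D] at hsum
  have hm2 : (C \ D).ncard ≤ 2 := by omega
  interval_cases h : (C \ D).ncard <;> omega

end SepOrder

section Shift

variable {V : Type*} {G : SimpleGraph V} {C D S : Set V} {u v w : V}

lemma sepEdges_diff (hCD : C ∪ D = Set.univ) (hS : S ⊆ C ∩ D) :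
    sepEdges G C (D \ S) =
      sepEdges G C D ∪ {e | ∃ s ∈ S, ∃ y ∈ G.neighborSet s \ C, e = s(s, y)} := by
  ext e
  constructor
  · rintro ⟨he, x, hx, y, hy, rfl⟩
    by_cases hxD : x ∈ D
    · exact Or.inr ⟨x, not_not.1 fun h => hx.2 ⟨hxD, h⟩, y, ⟨he, hy.2⟩, rfl⟩
    · exact Or.inl ⟨he, x, ⟨hx.1, hxD⟩, y, ⟨hy.1.1, hy.2⟩, rfl⟩
  · rintro (⟨he, x, hx, y, hy, rfl⟩ | ⟨s, hs, y, hy, rfl⟩)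
    · exact ⟨he, x, ⟨hx.1, fun h => hx.2 h.1⟩, y, ⟨⟨hy.1, fun h => hy.2 (hS h).1⟩, hy.2⟩, rfl⟩
    · exact ⟨hy.1, s, ⟨(hS hs).1, fun h => h.2 hs⟩, y,
        ⟨⟨mem_of_union_eq_univ hCD hy.2, fun h => hy.2 (hS h).1⟩, hy.2⟩, rfl⟩

lemma MixedSep.diff (hCD : MixedSep G C D) (hS : S ⊆ C ∩ D) : MixedSep G C (D \ S) := by
  refine ⟨?_, ?_, ?_⟩
  · rw [← Set.compl_subset_iff_union]
    intro x hx
    exact ⟨mem_of_union_eq_univ hCD.1 hx, fun h => hx (hS h).1⟩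
  · obtain ⟨x, hx⟩ := hCD.2.1
    exact ⟨x, hx.1, fun h => hx.2 h.1⟩
  · obtain ⟨x, hx⟩ := hCD.2.2
    exact ⟨x, ⟨hx.1, fun h => hx.2 (hS h).1⟩, hx.2⟩

lemma neighborSet_inter_diff_of_forall_not_adj (h : ∀ s ∈ S, ¬G.Adj u s) :
    G.neighborSet u ∩ (D \ S) = G.neighborSet u ∩ D := by
  ext x
  exact ⟨fun hx => ⟨hx.1, hx.2.1⟩, fun hx => ⟨hx.1, hx.2, fun hxS => h x hxS hx.1⟩⟩

variable [Finite V]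

lemma TriSep.neighborSet_diff_nonempty (hG : KConnected 3 G) (hCD : TriSep G C D)
    (hv : v ∈ C ∩ D) : (G.neighborSet v \ C).Nonempty := by
  by_contra! h
  have hS : {v} ⊆ C ∩ D := Set.singleton_subset_iff.2 hv
  have hE : sepEdges G C (D \ {v}) = sepEdges G C D := by
    rw [sepEdges_diff hCD.1.1.1 hS, Set.union_eq_left]
    rintro _ ⟨s, rfl, y, hy, rfl⟩
    exact absurd hy (h ▸ Set.notMem_empty y)
  have h3 := hG.three_le_sepOrder (hCD.1.1.diff hS)
  rw [sepOrder_eq, hE, ← Set.inter_sdiff_assoc, Set.ncard_sdiff_singleton_of_mem hv] at h3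
  have := hCD.ncard_inter_add_ncard_sepEdges
  have := (Set.ncard_pos).2 ⟨v, hv⟩
  omega

lemma TriSep.ncard_neighborSet_diff_eq_one (hG : KConnected 3 G) (hCD : TriSep G C D)
    (hv : v ∈ C ∩ D) (hdeg : (G.neighborSet v).ncard = 3) : (G.neighborSet v \ C).ncard = 1 := by
  have := Set.ncard_inter_add_ncard_sdiff_eq_ncard (G.neighborSet v) C
  have := (hCD.2 v hv).1
  have := (Set.ncard_pos).2 (hCD.neighborSet_diff_nonempty hG hv)
  omega

lemma TriSep.exists_neighborSet_inter_eq_singleton (hG : KConnected 3 G) (hCD : TriSep G C D)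
    (hv : v ∈ C ∩ D) (hdeg : (G.neighborSet v).ncard = 3) :
    ∃ w, G.neighborSet v ∩ (C ∩ D) = {w} := by
  have hC := hCD.ncard_neighborSet_diff_eq_one hG hv hdeg
  have hD := hCD.symm.ncard_neighborSet_diff_eq_one hG (Set.inter_comm C D ▸ hv) hdeg
  have hsplit := Set.ncard_inter_add_ncard_sdiff_eq_ncard (G.neighborSet v ∩ C) D
  have hdiff : (G.neighborSet v ∩ C) \ D = G.neighborSet v \ D := by
    ext x
    simp only [Set.mem_sdiff, Set.mem_inter_iff]
    exact ⟨fun h => ⟨h.1.1, h.2⟩,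
      fun h => ⟨⟨h.1, mem_of_union_eq_univ (Set.union_comm C D ▸ hCD.1.1.1) h.2⟩, h.2⟩⟩
  have := Set.ncard_inter_add_ncard_sdiff_eq_ncard (G.neighborSet v) C
  rw [hdiff, Set.inter_assoc] at hsplit
  exact Set.ncard_eq_one.1 (by omega)

/-- Shifting separator vertices with a single neighbour outside `C` into `C \ D` trades each of
them for one separator edge. -/
lemma TriSep.diff (hCD : TriSep G C D) (hS : S ⊆ C ∩ D)
    (hS1 : ∀ s ∈ S, (G.neighborSet s \ C).ncard = 1)
    (hdeg : ∀ u ∈ (C ∩ D) \ S, 2 ≤ (G.neighborSet u ∩ (D \ S)).ncard) :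
    TriSep G C (D \ S) := by
  choose! f hf using fun s hs => Set.ncard_eq_one.1 (hS1 s hs)
  have hnew :
      {e | ∃ s ∈ S, ∃ y ∈ G.neighborSet s \ C, e = s(s, y)} = (fun s => s(s, f s)) '' S := by
    ext e
    constructor
    · rintro ⟨s, hs, y, hy, rfl⟩
      rw [hf s hs, Set.mem_singleton_iff] at hy
      exact ⟨s, hs, by rw [hy]⟩
    · rintro ⟨s, hs, rfl⟩
      exact ⟨s, hs, f s, by rw [hf s hs]; rfl, rfl⟩
  have hinj : Set.InjOn (fun s => s(s, f s)) S := by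
    intro s hs s' hs' h
    rcases Sym2.eq_iff.1 h with ⟨h, -⟩ | ⟨h, -⟩
    · exact h
    · have : f s' ∈ G.neighborSet s' \ C := by rw [hf s' hs']; rfl
      exact absurd (h ▸ (hS hs).1) this.2
  have hdisj : Disjoint (sepEdges G C D) ((fun s => s(s, f s)) '' S) := by
    rw [Set.disjoint_right]
    rintro _ ⟨s, hs, rfl⟩
    exact not_mem_sepEdges_of_mem_inter (hS hs) _
  refine ⟨⟨hCD.1.1.diff hS, ?_⟩, fun u hu => ?_⟩
  · rw [sepOrder_eq, sepEdges_diff hCD.1.1.1 hS, hnew, Set.ncard_union_eq hdisj,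
      hinj.ncard_image, ← Set.inter_sdiff_assoc, Set.ncard_sdiff hS]
    have := hCD.ncard_inter_add_ncard_sepEdges
    have := Set.ncard_le_ncard hS
    omega
  · rw [← Set.inter_sdiff_assoc] at hu
    exact ⟨(hCD.2 u hu.1).1, hdeg u hu⟩

lemma TriSep.exists_shift (hG : KConnected 3 G) (hCD : TriSep G C D) (hv : v ∈ C ∩ D)
    (hdeg : (G.neighborSet v).ncard = 3) (hw : G.neighborSet v ∩ (C ∩ D) = {w}) :
    ∃ S, v ∈ S ∧ S ⊆ {v, w} ∧ TriSep G C (D \ S) := by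
  have hv1 := hCD.ncard_neighborSet_diff_eq_one hG hv hdeg
  have hadjv : ∀ x ∈ C ∩ D, G.Adj v x → x = w := fun x hx hvx =>
    Set.mem_singleton_iff.1 (hw ▸ ⟨hvx, hx⟩)
  by_cases hkeep : ∀ u ∈ (C ∩ D) \ {v}, 2 ≤ (G.neighborSet u ∩ (D \ {v})).ncard
  · exact ⟨{v}, rfl, by simp, hCD.diff (by simpa using hv) (by simpa using hv1) hkeep⟩
  push Not at hkeep
  obtain ⟨u, hu, hu2⟩ := hkeep
  -- Only a neighbour of `v` can lose a neighbour in `D`, so the culprit is `w`.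
  obtain rfl : u = w := by
    refine hadjv u hu.1 (not_not.1 fun hvu => ?_)
    rw [neighborSet_inter_diff_of_forall_not_adj (by simpa [G.adj_comm] using hvu)] at hu2
    exact absurd (hCD.2 u hu.1).2 (by omega)
  have hout : G.neighborSet u \ C = G.neighborSet u ∩ (D \ {v}) :=
    Set.eq_of_subset_of_ncard_le
      (fun x hx => ⟨hx.1, mem_of_union_eq_univ hCD.1.1.1 hx.2, fun h => hx.2 (h ▸ hv.1)⟩)
      (by have := (Set.ncard_pos).2 (hCD.neighborSet_diff_nonempty hG hu.1); omega)
  have hu1 : (G.neighborSet u \ C).ncard = 1 := by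
    have := (Set.ncard_pos).2 (hCD.neighborSet_diff_nonempty hG hu.1)
    rw [← hout] at hu2
    omega
  refine ⟨{v, u}, Or.inl rfl, subset_rfl,
    hCD.diff (Set.insert_subset_iff.2 ⟨hv, Set.singleton_subset_iff.2 hu.1⟩) ?_ ?_⟩
  · rintro s (rfl | rfl)
    exacts [hv1, hu1]
  · intro x hx
    rw [neighborSet_inter_diff_of_forall_not_adj]
    · exact (hCD.2 x hx.1).2
    rintro s (rfl | rfl) hxs
    · exact hx.2 (Or.inr (hadjv x hx.1 hxs.symm))
    · have : x ∈ G.neighborSet s \ C := hout ▸ ⟨hxs.symm, hx.1.2, fun h => hx.2 (Or.inl h)⟩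
      exact this.2 hx.1.1

end Shift

section Crossing

variable {V : Type*} [Finite V] {G : SimpleGraph V} {A B C D S S' : Set V} {v w x x' y y' : V}

/-- If `A ⊆ C` and `B ⊆ D`, the separator of `(A,B)` contains that of `(C,D)` except for the two
adjacent vertices `x`, `y`, which it replaces by the three edges `xy`, `xx'`, `yy'`. -/
lemma sepOrder_lt_of_crossing (hAB : A ∪ B = Set.univ) (hAC : A ⊆ C) (hBD : B ⊆ D)
    (hx : x ∈ C ∩ D) (hy : y ∈ C ∩ D) (hxB : x ∉ B) (hyA : y ∉ A)
    (hrest : (C ∩ D) \ {x, y} ⊆ A ∩ B) (hxy : G.Adj x y)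
    (hxx' : G.Adj x x') (hx' : x' ∉ C) (hyy' : G.Adj y y') (hy' : y' ∉ D) :
    sepOrder G C D < sepOrder G A B := by
  have hBA : B ∪ A = Set.univ := Set.union_comm A B ▸ hAB
  have hoff : ∀ {z}, z ∉ C → z ∈ B \ A := fun hz =>
    ⟨mem_of_union_eq_univ hAB (fun h => hz (hAC h)), fun h => hz (hAC h)⟩
  have hoff' : ∀ {z}, z ∉ D → z ∈ A \ B := fun hz =>
    ⟨mem_of_union_eq_univ hBA (fun h => hz (hBD h)), fun h => hz (hBD h)⟩
  have hxA : x ∈ A \ B := ⟨mem_of_union_eq_univ hBA hxB, hxB⟩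
  have hyB : y ∈ B \ A := ⟨mem_of_union_eq_univ hAB hyA, hyA⟩
  have hxy_ne : x ≠ y := fun h => hyA (h ▸ hxA.1)
  have hsub : insert s(x, y) (insert s(x, x') (insert s(y', y) (sepEdges G C D))) ⊆
      sepEdges G A B := by
    rintro e (rfl | rfl | rfl | ⟨he, c, hc, d, hd, rfl⟩)
    exacts [mem_sepEdges hxy hxA hyB, mem_sepEdges hxx' hxA (hoff hx'),
      mem_sepEdges hyy'.symm (hoff' hy') hyB, mem_sepEdges he (hoff' hc.2) (hoff hd.2)]
  have hne₁ : s(x, y) ≠ s(x, x') := fun h => hx' (Sym2.congr_right.1 h ▸ hy.1)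
  have hne₂ : s(x, y) ≠ s(y', y) := fun h => hy' (Sym2.congr_left.1 h ▸ hx.2)
  have hne₃ : s(x, x') ≠ s(y', y) := fun h => by
    rcases Sym2.eq_iff.1 h with ⟨h, -⟩ | ⟨h, -⟩
    exacts [hy' (h ▸ hx.2), hxy_ne h]
  have hcard := Set.ncard_le_ncard hsub
  rw [Set.ncard_insert_of_notMem (by
      rintro (h | h | h)
      exacts [hne₁ h, hne₂ h, not_mem_sepEdges_of_mem_inter hx y h]),
    Set.ncard_insert_of_notMem (by
      rintro (h | h)
      exacts [hne₃ h, not_mem_sepEdges_of_mem_inter hx x' h]),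
    Set.ncard_insert_of_notMem (Sym2.eq_swap ▸ not_mem_sepEdges_of_mem_inter hy y')] at hcard
  have hpair : {x, y} ⊆ C ∩ D := Set.insert_subset_iff.2 ⟨hx, Set.singleton_subset_iff.2 hy⟩
  have hrest' := Set.ncard_le_ncard hrest
  rw [Set.ncard_sdiff hpair, Set.ncard_pair hxy_ne] at hrest'
  have := Set.ncard_le_ncard hpair
  rw [Set.ncard_pair hxy_ne] at this
  rw [sepOrder_eq, sepOrder_eq]
  omega

/-- By size, `A` is the whole separator of `(C,D)`. Each vertex of `A` then takes up a slot of
the separator of `(A,B)`, and `v`, which is not in `B` as `(A,B)` is strong, takes up two. -/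
lemma false_of_subset_inter (hG : KConnected 3 G) (hAB : TriSep G A B) (hABs : StrongSep G A B)
    (hcyc : HasCycleIn G A) (hCD : TriSep G C D) (hv : v ∈ C ∩ D)
    (hdeg : (G.neighborSet v).ncard = 3) (hsub : A ⊆ C ∩ D) : False := by
  have := Fintype.ofFinite V
  classical
  have hA3 := hcyc.three_le_ncard
  obtain rfl : A = C ∩ D :=
    Set.eq_of_subset_of_ncard_le hsub (by linarith [hCD.ncard_inter_add_ncard_sepEdges])
  have hvB : v ∉ B := fun h => by linarith [hABs v ⟨hv, h⟩]
  obtain ⟨w, hw⟩ := hCD.exists_neighborSet_inter_eq_singleton hG hv hdeg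
  have hv2 : 2 ≤ (G.neighborSet v \ (C ∩ D)).ncard := by
    have := Set.ncard_inter_add_ncard_sdiff_eq_ncard (G.neighborSet v) (C ∩ D)
    rw [hw, Set.ncard_singleton] at this
    omega
  have hout : ∀ u ∈ C ∩ D, 1 ≤ (G.neighborSet u \ (C ∩ D)).ncard := fun u hu => by
    have := Set.ncard_inter_add_ncard_sdiff_eq_ncard (G.neighborSet u) (C ∩ D)
    have := ncard_neighborSet_inter_lt (G := G) hu
    linarith [hG.three_le_ncard_neighborSet u, hCD.ncard_inter_add_ncard_sepEdges]
  set U := ((C ∩ D) \ B).toFinset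
  have hvU : v ∈ U := Set.mem_toFinset.2 ⟨hv, hvB⟩
  have hsum := sum_ncard_neighborSet_diff_le_ncard_sepEdges (G := G) hAB.1.1.1 U (by simp [U])
  rw [← Finset.add_sum_erase _ _ hvU] at hsum
  have hrest := Finset.card_nsmul_le_sum (U.erase v) _ 1
    fun u hu => hout u (Set.mem_toFinset.1 (Finset.mem_of_mem_erase hu)).1
  rw [Finset.card_erase_of_mem hvU, smul_eq_mul, mul_one, ← Set.ncard_eq_toFinset_card'] at hrest
  have := Set.ncard_inter_add_ncard_sdiff_eq_ncard (C ∩ D) B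
  have := (Set.ncard_pos (s := (C ∩ D) \ B)).2 ⟨v, hv, hvB⟩
  have := hAB.ncard_inter_add_ncard_sepEdges
  omega

lemma false_of_subset_diff (hG : KConnected 3 G) (hAB : TriSep G A B) (hCD : TriSep G C D)
    (hvw : G.Adj v w) (hvwCD : {v, w} ⊆ C ∩ D) (hS : S ⊆ {v, w}) (hS' : S' ⊆ {v, w})
    (hAC : A ⊆ C) (hBD : B ⊆ D) (hDB : D \ S ⊆ B) (hCA : C \ S' ⊆ A)
    (hDB' : ¬D ⊆ B) (hCA' : ¬C ⊆ A) : False := by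
  obtain ⟨x, hxD, hxB⟩ := Set.not_subset.1 hDB'
  obtain ⟨y, hyC, hyA⟩ := Set.not_subset.1 hCA'
  have hxS : x ∈ S := not_not.1 fun h => hxB (hDB ⟨hxD, h⟩)
  have hyS' : y ∈ S' := not_not.1 fun h => hyA (hCA ⟨hyC, h⟩)
  have hxy : x ≠ y := fun h => hyA (h ▸ mem_of_union_eq_univ (Set.union_comm A B ▸ hAB.1.1.1) hxB)
  -- `x ∈ A \ B` and `y ∈ B \ A` both lie in `{v, w}`, so they are `v` and `w` in some order.
  have hpair : G.Adj x y ∧ {v, w} ⊆ ({x, y} : Set V) := by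
    rcases hS hxS with rfl | rfl <;> rcases hS' hyS' with rfl | rfl
    · exact absurd rfl hxy
    · exact ⟨hvw, subset_rfl⟩
    · exact ⟨hvw.symm, (Set.pair_comm y x).subset⟩
    · exact absurd rfl hxy
  have hx := hvwCD (hS hxS)
  have hy := hvwCD (hS' hyS')
  have hrest : (C ∩ D) \ {x, y} ⊆ A ∩ B := fun u hu =>
    ⟨hCA ⟨hu.1.1, fun h => hu.2 (hpair.2 (hS' h))⟩, hDB ⟨hu.1.2, fun h => hu.2 (hpair.2 (hS h))⟩⟩
  obtain ⟨x', hx'⟩ := hCD.neighborSet_diff_nonempty hG hx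
  obtain ⟨y', hy'⟩ := hCD.symm.neighborSet_diff_nonempty hG (Set.inter_comm C D ▸ hy)
  have := sepOrder_lt_of_crossing hAB.1.1.1 hAC hBD hx hy hxB hyA hrest hpair.1 hx'.1 hx'.2
    hy'.1 hy'.2
  rw [hCD.1.2, hAB.1.2] at this
  exact lt_irrefl _ this

lemma nested_of_nested_shifts (hG : KConnected 3 G) (hAB : TriSep G A B)
    (hABs : StrongSep G A B) (hABnt : NontrivialSep G A B) (hCD : TriSep G C D) (hv : v ∈ C ∩ D)
    (hdeg : (G.neighborSet v).ncard = 3) (hvw : G.Adj v w) (hvwCD : {v, w} ⊆ C ∩ D)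
    (hS : S ⊆ {v, w}) (hS' : S' ⊆ {v, w})
    (h₁ : Nested A B C (D \ S)) (h₂ : Nested A B D (C \ S')) : Nested A B C D := by
  by_contra hn
  have hn' : ¬Nested A B D C := fun h => hn (nested_comm_right.1 h)
  rcases h₁.resolve_diff_right hn with ⟨hAC, hDB⟩ | ⟨hBC, hDA⟩ <;>
    rcases h₂.resolve_diff_right hn' with ⟨hAD, hCB⟩ | ⟨hBD, hCA⟩
  · exact false_of_subset_inter hG hAB hABs hABnt.1 hCD hv hdeg (Set.subset_inter hAC hAD)
  · exact false_of_subset_diff hG hAB hCD hvw hvwCD hS hS' hAC hBD hDB hCA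
      (fun h => hn (Or.inl ⟨hAC, h⟩)) (fun h => hn (Or.inr (Or.inr (Or.inr ⟨hBD, h⟩))))
  · exact false_of_subset_diff hG hAB.symm hCD hvw hvwCD hS hS' hBC hAD hDA hCB
      (fun h => hn (Or.inr (Or.inr (Or.inl ⟨hBC, h⟩)))) (fun h => hn (Or.inr (Or.inl ⟨hAD, h⟩)))
  · exact false_of_subset_inter hG hAB.symm hABs.symm hABnt.2 hCD hv hdeg
      (Set.subset_inter hBC hBD)

lemma ncard_inter_diff_lt (hv : v ∈ C ∩ D) (hvS : v ∈ S) : (C ∩ (D \ S)).ncard < (C ∩ D).ncard := by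
  rw [← Set.inter_sdiff_assoc]
  exact Set.ncard_lt_ncard (Set.sdiff_ssubset_left_iff.2 ⟨v, hv, hvS⟩)

lemma exists_smaller_not_nested (hG : KConnected 3 G) (hAB : TriSep G A B)
    (hABs : StrongSep G A B) (hABnt : NontrivialSep G A B) (hCD : TriSep G C D) (hv : v ∈ C ∩ D)
    (hdeg : (G.neighborSet v).ncard = 3) (hn : ¬Nested A B C D) :
    ∃ C' D', TriSep G C' D' ∧ (C' ∩ D').ncard < (C ∩ D).ncard ∧ ¬Nested A B C' D' := by
  obtain ⟨w, hw⟩ := hCD.exists_neighborSet_inter_eq_singleton hG hv hdeg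
  have hw' : w ∈ G.neighborSet v ∩ (C ∩ D) := hw ▸ rfl
  have hvD : v ∈ D ∩ C := Set.inter_comm C D ▸ hv
  obtain ⟨S, hvS, hS, h₁⟩ := hCD.exists_shift hG hv hdeg hw
  obtain ⟨S', hvS', hS', h₂⟩ := hCD.symm.exists_shift hG hvD hdeg (Set.inter_comm C D ▸ hw)
  by_cases hn₁ : Nested A B C (D \ S)
  · by_cases hn₂ : Nested A B D (C \ S')
    · exact absurd (nested_of_nested_shifts hG hAB hABs hABnt hCD hv hdeg hw'.1
        (Set.insert_subset_iff.2 ⟨hv, Set.singleton_subset_iff.2 hw'.2⟩) hS hS' hn₁ hn₂) hn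
    · exact ⟨D, C \ S', h₂, Set.inter_comm C D ▸ ncard_inter_diff_lt hvD hvS', hn₂⟩
  · exact ⟨C, D \ S, h₁, ncard_inter_diff_lt hv hvS, hn₁⟩

end Crossing

section Acyclic

variable {V : Type*} {G : SimpleGraph V} {C D : Set V}

lemma isAcyclic_induce_of_not_hasCycleIn (h : ¬HasCycleIn G C) : (G.induce C).IsAcyclic := by
  intro u c hc
  have hsupp : ∀ x ∈ (c.map (Embedding.induce C).toHom).support, x ∈ C := by
    intro x hx
    rw [Walk.support_map, List.mem_map] at hx
    obtain ⟨x, -, rfl⟩ := hx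
    exact x.2
  exact h ⟨_, _, hc.map (Embedding.induce (G := G) C).injective, hsupp⟩

lemma exists_ne_neighborSet_subsingleton_of_isAcyclic {W : Type*} [Finite W] [Nontrivial W]
    {H : SimpleGraph W} (hH : H.IsAcyclic) :
    ∃ u w, u ≠ w ∧ (H.neighborSet u).Subsingleton ∧ (H.neighborSet w).Subsingleton := by
  obtain ⟨u, w, p, hp, hmax⟩ := Walk.exists_isPath_forall_isPath_length_le_length H
  by_cases hnil : p.Nil
  · have hempty : ∀ x, H.neighborSet x = ∅ := fun x =>
      Set.eq_empty_of_forall_notMem fun y (hxy : H.Adj x y) => by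
        have := hmax _ _ (.cons hxy .nil) (Walk.IsPath.nil.cons (by simpa using hxy.ne))
        rw [hnil.length_eq_zero, Walk.length_cons] at this
        omega
    obtain ⟨x, y, hxy⟩ := exists_pair_ne W
    exact ⟨x, y, hxy, by simp [hempty], by simp [hempty]⟩
  -- All neighbours of an end of a longest path lie on it, so they are its successor on the path.
  have hend : ∀ {a b} (q : H.Walk a b), q.IsPath → q.length = p.length →
      (H.neighborSet a).Subsingleton := by
    intro a b q hq hlen
    have hsnd : ∀ x ∈ H.neighborSet a, x = q.snd := fun x hx =>
      hH.eq_snd_of_adj_start hq hx <| not_not.1 fun hxq => by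
        have := hmax _ _ _ (hq.cons hxq (h := hx.symm))
        rw [Walk.length_cons] at this
        omega
    exact fun x hx y hy => (hsnd x hx).trans (hsnd y hy).symm
  exact ⟨u, w, hp.nil_iff_eq.not.mp hnil, hend p hp rfl, hend p.reverse hp.reverse (by simp)⟩

variable [Finite V]

lemma exists_ne_ncard_neighborSet_inter_le_one (h : ¬HasCycleIn G C) (hC : C.Nontrivial) :
    ∃ u ∈ C, ∃ w ∈ C, u ≠ w ∧
      (G.neighborSet u ∩ C).ncard ≤ 1 ∧ (G.neighborSet w ∩ C).ncard ≤ 1 := by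
  have : Nontrivial C := hC.coe_sort
  obtain ⟨u, w, huw, hu, hw⟩ :=
    exists_ne_neighborSet_subsingleton_of_isAcyclic (isAcyclic_induce_of_not_hasCycleIn h)
  have himage : ∀ x : C, G.neighborSet x ∩ C = Subtype.val '' (G.induce C).neighborSet x := by
    intro x
    ext y
    exact ⟨fun hy => ⟨⟨y, hy.2⟩, hy.1, rfl⟩, by rintro ⟨y, hy, rfl⟩; exact ⟨hy, y.2⟩⟩
  refine ⟨u, u.2, w, w.2, Subtype.coe_injective.ne huw, ?_, ?_⟩ <;>
    rw [Set.ncard_le_one_iff_subsingleton, himage]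
  exacts [hu.image _, hw.image _]

lemma TriSep.eq_singleton_of_not_hasCycleIn (hG : KConnected 3 G) (hCD : TriSep G C D)
    (hC : ¬HasCycleIn G C) : ∃ z, C = {z} ∧ D = {z}ᶜ ∧ (G.neighborSet z).ncard = 3 := by
  have hlow : ∀ u ∈ C, (G.neighborSet u ∩ C).ncard ≤ 1 →
      u ∈ C \ D ∧ 2 ≤ (G.neighborSet u \ C).ncard := fun u hu h1 => by
    refine ⟨⟨hu, fun hD => ?_⟩, ?_⟩
    · linarith [(hCD.2 u ⟨hu, hD⟩).1]
    · linarith [Set.ncard_inter_add_ncard_sdiff_eq_ncard (G.neighborSet u) C,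
        hG.three_le_ncard_neighborSet u]
  -- Otherwise the forest `G[C]` has two vertices of degree at most one, which would send four
  -- edges across the separator.
  have hsub : C.Subsingleton := by
    by_contra hC'
    obtain ⟨u, hu, w, hw, huw, hu1, hw1⟩ :=
      exists_ne_ncard_neighborSet_inter_le_one hC (Set.not_subsingleton_iff.1 hC')
    have := ncard_mul_le_ncard_sepEdges (G := G) hCD.1.1.1 (U := {u, w}) (m := 2)
      (Set.insert_subset_iff.2 ⟨(hlow u hu hu1).1, Set.singleton_subset_iff.2 (hlow w hw hw1).1⟩)
      (by rintro x (rfl | rfl); exacts [(hlow x hu hu1).2, (hlow x hw hw1).2])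
    rw [Set.ncard_pair huw] at this
    linarith [hCD.ncard_inter_add_ncard_sepEdges]
  obtain ⟨z, hz⟩ := hCD.1.1.2.1
  have hCz : C = {z} := hsub.eq_singleton_of_mem hz.1
  refine ⟨z, hCz, Set.ext fun x => ⟨fun hx hxz => hz.2 (hxz ▸ hx),
    fun hx => mem_of_union_eq_univ hCD.1.1.1 (hCz ▸ hx)⟩,
    le_antisymm ?_ (hG.three_le_ncard_neighborSet z)⟩
  have := ncard_mul_le_ncard_sepEdges (G := G) hCD.1.1.1 (U := {z})
    (m := (G.neighborSet z).ncard) (Set.singleton_subset_iff.2 hz)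
    (by rintro _ rfl; rw [hCz, Set.sdiff_singleton_eq_self G.notMem_neighborSet_self])
  rw [Set.ncard_singleton, one_mul] at this
  linarith [hCD.ncard_inter_add_ncard_sepEdges]

end Acyclic

section Main

variable {V : Type*} [Finite V] {G : SimpleGraph V} {A B C D : Set V} {v : V}

lemma nested_of_not_nontrivialSep (hG : KConnected 3 G) (hAB : TriSep G A B)
    (hABs : StrongSep G A B) (hCD : TriSep G C D) (hnt : ¬NontrivialSep G C D) :
    Nested A B C D := by
  have hside : ∀ {C D}, TriSep G C D → ¬HasCycleIn G C → Nested A B C D := fun hCD hC => by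
    obtain ⟨z, rfl, rfl, hz⟩ := hCD.eq_singleton_of_not_hasCycleIn hG hC
    exact nested_singleton_compl hAB.1.1.1 fun h => by linarith [hABs z h]
  by_cases hC : HasCycleIn G C
  · exact nested_comm_right.2 (hside hCD.symm fun hD => hnt ⟨hC, hD⟩)
  · exact hside hCD hC

lemma nested_of_forall_strongSep (hG : KConnected 3 G) (hAB : TriSep G A B)
    (hABs : StrongSep G A B) (hABnt : NontrivialSep G A B)
    (hH : ∀ C D, TriSep G C D → StrongSep G C D → NontrivialSep G C D → Nested A B C D)
    (hCD : TriSep G C D) : Nested A B C D := by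
  induction hn : (C ∩ D).ncard using Nat.strong_induction_on generalizing C D with
  | _ n ih =>
  by_cases hnt : NontrivialSep G C D
  swap
  · exact nested_of_not_nontrivialSep hG hAB hABs hCD hnt
  by_cases hs : StrongSep G C D
  · exact hH C D hCD hs hnt
  obtain ⟨v, hv, hlt⟩ : ∃ v ∈ C ∩ D, (G.neighborSet v).ncard < 4 := by
    unfold StrongSep at hs
    push Not at hs
    exact hs
  have hdeg : (G.neighborSet v).ncard = 3 := by linarith [hG.three_le_ncard_neighborSet v]
  by_contra hN
  obtain ⟨C', D', hC'D', hlt', hN'⟩ := exists_smaller_not_nested hG hAB hABs hABnt hCD hv hdeg hN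
  exact hN' (ih _ (hn ▸ hlt') hC'D' rfl)

lemma TriSep.singleton_compl (hG : KConnected 3 G) (hdeg : (G.neighborSet v).ncard = 3) :
    TriSep G {v} {v}ᶜ := by
  have hE : sepEdges G {v} {v}ᶜ = (fun y => s(v, y)) '' G.neighborSet v := by
    ext e
    constructor
    · rintro ⟨he, x, hx, y, -, rfl⟩
      exact ⟨y, hx.1 ▸ he, by rw [hx.1]⟩
    · rintro ⟨y, hy, rfl⟩
      exact mem_sepEdges hy ⟨rfl, fun h => h rfl⟩ ⟨fun h => hy.ne h.symm, fun h => hy.ne h.symm⟩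
  obtain ⟨y, -, hy⟩ := Set.exists_mem_notMem_of_ncard_lt_ncard
    (s := {v}) (t := Set.univ) (by rw [Set.ncard_singleton, Set.ncard_univ]; linarith [hG.1])
  refine ⟨⟨⟨Set.union_compl_self _, ⟨v, rfl, fun h => h rfl⟩, ⟨y, hy, hy⟩⟩, ?_⟩, ?_⟩
  · rw [sepOrder_eq, Set.inter_compl_self, hE,
      Set.ncard_image_of_injective _ fun _ _ h => Sym2.congr_right.1 h]
    simpa using hdeg
  · rintro u ⟨hu, hu'⟩
    exact absurd hu hu'

lemma TotallyNested.strongSep (hG : KConnected 3 G) (hAB : TriSep G A B)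
    (hTN : TotallyNested G A B) : StrongSep G A B := by
  intro v hv
  by_contra! hlt
  have hdeg : (G.neighborSet v).ncard = 3 := by linarith [hG.three_le_ncard_neighborSet v]
  have hsingle : ∀ {X : Set V}, X ⊆ {v} → (G.neighborSet v ∩ X).ncard = 0 := fun hX =>
    (Set.ncard_eq_zero).2 <| Set.eq_empty_of_forall_notMem fun x hx =>
      G.notMem_neighborSet_self (Set.mem_singleton_iff.1 (hX hx.2) ▸ hx.1)
  rcases hTN _ _ (TriSep.singleton_compl hG hdeg) with ⟨h, -⟩ | ⟨h, -⟩ | ⟨h, -⟩ | ⟨h, -⟩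
  · linarith [(hAB.2 v hv).1, hsingle h]
  · exact h hv.1 rfl
  · linarith [(hAB.2 v hv).2, hsingle h]
  · exact h hv.2 rfl

end Main

variable {V : Type*} [Fintype V] [DecidableEq V]

/-- A nontrivial tri-separation of a 3-connected graph is totally
nested iff it is strong and nested with every strong nontrivial tri-separation. -/
theorem stmt11 (G : SimpleGraph V) (h3 : KConnected 3 G) (A B : Set V)
    (hAB : TriSep G A B) (hnt : NontrivialSep G A B) :
    TotallyNested G A B ↔
      (StrongSep G A B ∧ ∀ C D : Set V,
        TriSep G C D → StrongSep G C D → NontrivialSep G C D → Nested A B C D) :=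
  ⟨fun hTN => ⟨hTN.strongSep h3 hAB, fun C D hCD _ _ => hTN C D hCD⟩,
    fun ⟨hABs, hH⟩ _ _ hCD => nested_of_forall_strongSep h3 hAB hABs hnt hH hCD⟩

end Paper
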